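/- arXiv:1301.3096 — 13 statements merged into one kernel-verified Lean document; each statement's English description precedes it below -/
import Mathlib

section
/- A division rule f for bankruptcy problems is a game theoretic division rule if and only if f(E,d) = f(E, d ∧ E) for every bankruptcy problem (E,d), where d ∧ E denotes the claims vector obtained by replacing each claim d_i by min(d_i, E). -/
open Finset

/-- `(E, d)` is a (classical) bankruptcy problem: nonnegative estate, nonnegative
claims, and the estate does not exceed the total claim. -/
def IsBP {n : ℕ} (E : ℝ) (d : Fin n → ℝ) : Prop :=
  0 ≤ E ∧ (∀ i, 0 ≤ d i) ∧ E ≤ ∑ i, d i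

/-- `f` is a division rule: reasonable and efficient on every bankruptcy problem. -/
def IsDivisionRule {n : ℕ} (f : ℝ → (Fin n → ℝ) → Fin n → ℝ) : Prop :=
  ∀ E d, IsBP E d → (∀ i, 0 ≤ f E d i ∧ f E d i ≤ d i) ∧ (∑ i, f E d i) = E

/-- Assumption 1: over the domain of bankruptcy problems, each component `f i` is
nondecreasing in the estate `E`, nondecreasing in the own claim `d i`, and
nonincreasing in every other claim `d j`, `j ≠ i`. -/
def Assumption1 {n : ℕ} (f : ℝ → (Fin n → ℝ) → Fin n → ℝ) : Prop :=
  (∀ E E' (d : Fin n → ℝ), IsBP E d → IsBP E' d → E ≤ E' → ∀ i, f E d i ≤ f E' d i) ∧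
  (∀ E (d d' : Fin n → ℝ) (i : Fin n), IsBP E d → IsBP E d' → d i ≤ d' i →
      (∀ j, j ≠ i → d j = d' j) → f E d i ≤ f E d' i) ∧
  (∀ E (d d' : Fin n → ℝ) (i j : Fin n), j ≠ i → IsBP E d → IsBP E d' → d' j ≤ d j →
      (∀ k, k ≠ j → d k = d' k) → f E d i ≤ f E d' i)

/-- The bankruptcy game `v_{E,d}(S) = max(0, E − Σ_{i ∈ N∖S} d i)`. -/
def bankruptcyGame {n : ℕ} (E : ℝ) (d : Fin n → ℝ) (S : Finset (Fin n)) : ℝ :=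
  max 0 (E - ∑ i ∈ Sᶜ, d i)

/-- The truncated claims vector `d ∧ E`, with components `min (d i) E`. -/
def truncate {n : ℕ} (E : ℝ) (d : Fin n → ℝ) : Fin n → ℝ :=
  fun i => min (d i) E

/-- Interval bankruptcy situation with exact estate: estate `E` and interval
claims `[dl i, du i]`. -/
def IsIntervalBP {n : ℕ} (E : ℝ) (dl du : Fin n → ℝ) : Prop :=
  0 ≤ E ∧ (∀ i, 0 ≤ dl i ∧ dl i ≤ du i) ∧ E ≤ ∑ i, dl i

/-- `d` is a selection of the interval claims `[dl, du]`. -/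
def IsSelection {n : ℕ} (dl du d : Fin n → ℝ) : Prop :=
  ∀ i, dl i ≤ d i ∧ d i ≤ du i

/-- Lower endpoint of the interval bankruptcy rule based on `f`:
`f i (E, dl i, du₋ᵢ)`. -/
def ruleLow {n : ℕ} (f : ℝ → (Fin n → ℝ) → Fin n → ℝ) (E : ℝ) (dl du : Fin n → ℝ)
    (i : Fin n) : ℝ :=
  f E (Function.update du i (dl i)) i

/-- Upper endpoint of the interval bankruptcy rule based on `f`:
`f i (E, du i, dl₋ᵢ)`. -/
def ruleHigh {n : ℕ} (f : ℝ → (Fin n → ℝ) → Fin n → ℝ) (E : ℝ) (dl du : Fin n → ℝ)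
    (i : Fin n) : ℝ :=
  f E (Function.update dl i (du i)) i

/-- The interval bankruptcy rule (with exact estate) based on `f`, as an `n`-tuple of
intervals encoded as pairs (lower endpoint, upper endpoint). -/
def intervalRule {n : ℕ} (f : ℝ → (Fin n → ℝ) → Fin n → ℝ) (E : ℝ)
    (dl du : Fin n → ℝ) : Fin n → ℝ × ℝ :=
  fun i => (ruleLow f E dl du i, ruleHigh f E dl du i)

/-- The interval bankruptcy game (with exact estate), each coalition value being the
interval `[v_{E,du}(S), v_{E,dl}(S)]` encoded as a pair. -/
def intervalGame {n : ℕ} (E : ℝ) (dl du : Fin n → ℝ) :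
    Finset (Fin n) → ℝ × ℝ :=
  fun S => (bankruptcyGame E du S, bankruptcyGame E dl S)

/-- Interval bankruptcy situation with interval estate `[El, Eu]` and interval
claims `[dl i, du i]`. -/
def IsIntervalBPE {n : ℕ} (El Eu : ℝ) (dl du : Fin n → ℝ) : Prop :=
  0 ≤ El ∧ El ≤ Eu ∧ (∀ i, 0 ≤ dl i ∧ dl i ≤ du i) ∧ Eu ≤ ∑ i, dl i

/-- The interval bankruptcy rule based on `f` for an interval estate. -/
def intervalRuleE {n : ℕ} (f : ℝ → (Fin n → ℝ) → Fin n → ℝ) (El Eu : ℝ)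
    (dl du : Fin n → ℝ) : Fin n → ℝ × ℝ :=
  fun i => (ruleLow f El dl du i, ruleHigh f Eu dl du i)

/-- The interval bankruptcy game for an interval estate. -/
def intervalGameE {n : ℕ} (El Eu : ℝ) (dl du : Fin n → ℝ) :
    Finset (Fin n) → ℝ × ℝ :=
  fun S => (bankruptcyGame El du S, bankruptcyGame Eu dl S)

lemma truncate_isBP {n : ℕ} {E : ℝ} {d : Fin n → ℝ} (h : IsBP E d) :
    IsBP E (truncate E d) := by
  obtain ⟨hE, hd, hsum⟩ := h
  refine ⟨hE, fun i => le_min (hd i) hE, ?_⟩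
  by_cases hc : ∃ i, E ≤ d i
  · obtain ⟨i, hi⟩ := hc
    calc E = min (d i) E := (min_eq_right hi).symm
    _ ≤ ∑ j, min (d j) E :=
      Finset.single_le_sum (fun j _ => le_min (hd j) hE) (Finset.mem_univ i)
  · push_neg at hc
    have : ∀ j ∈ Finset.univ, min (d j) E = d j := fun j _ => min_eq_left (hc j).le
    rw [show (truncate E d) = fun j => min (d j) E from rfl]
    calc E ≤ ∑ j, d j := hsum
    _ = ∑ j, min (d j) E := by rw [Finset.sum_congr rfl this]

lemma game_truncate {n : ℕ} {E : ℝ} {d : Fin n → ℝ} (h : IsBP E d) :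
    bankruptcyGame E d = bankruptcyGame E (truncate E d) := by
  obtain ⟨hE, hd, _⟩ := h
  funext S
  unfold bankruptcyGame truncate
  by_cases hc : ∃ j ∈ Sᶜ, E < d j
  · obtain ⟨j, hj, hjE⟩ := hc
    have h1 : E - ∑ i ∈ Sᶜ, d i ≤ 0 := by
      have := Finset.single_le_sum (f := d) (fun i _ => hd i) hj
      linarith
    have h2 : E - ∑ i ∈ Sᶜ, min (d i) E ≤ 0 := by
      have := Finset.single_le_sum (f := fun i => min (d i) E)
        (fun i _ => le_min (hd i) hE) hj
      have hm : min (d j) E = E := min_eq_right hjE.le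
      simp only [hm] at this
      linarith
    rw [max_eq_left h1, max_eq_left h2]
  · push_neg at hc
    have : ∑ i ∈ Sᶜ, min (d i) E = ∑ i ∈ Sᶜ, d i :=
      Finset.sum_congr rfl fun i hi => min_eq_left (hc i hi)
    rw [this]

/-- Curiel–Maschler–Tijs, Theorem 5: a division rule `f` is game
theoretic iff `f (E, d) = f (E, d ∧ E)` for every bankruptcy problem `(E, d)`. -/
theorem stmt_0 (n : ℕ) (hn : 1 ≤ n)
    (f : ℝ → (Fin n → ℝ) → Fin n → ℝ) (hf : IsDivisionRule f) :
    (∃ g : (Finset (Fin n) → ℝ) → Fin n → ℝ,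
        ∀ E d, IsBP E d → f E d = g (bankruptcyGame E d)) ↔
      (∀ E d, IsBP E d → f E d = f E (truncate E d)) := by
  constructor
  · rintro ⟨g, hg⟩ E d hbp
    rw [hg E d hbp, hg E (truncate E d) (truncate_isBP hbp), game_truncate hbp]
  · intro h
    refine ⟨fun v => f (v Finset.univ) (fun i => v Finset.univ - v {i}ᶜ), ?_⟩
    intro E d hbp
    obtain ⟨hE, hd, hsum⟩ := hbp
    have hvuniv : bankruptcyGame E d Finset.univ = E := by
      simp [bankruptcyGame, max_eq_right hE]
    have hvi : ∀ i : Fin n, E - bankruptcyGame E d {i}ᶜ = min (d i) E := by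
      intro i
      have : bankruptcyGame E d {i}ᶜ = max 0 (E - d i) := by
        simp [bankruptcyGame]
      rw [this]
      rcases le_total (d i) E with hle | hle
      · rw [max_eq_right (by linarith), min_eq_left hle]; ring
      · rw [max_eq_left (by linarith), min_eq_right hle]; ring
    simp only [hvuniv]
    have : (fun i => E - bankruptcyGame E d {i}ᶜ) = truncate E d := by
      funext i; rw [hvi i]; rfl
    rw [this]
    exact h E d ⟨hE, hd, hsum⟩
end

section
/- Let f be a division rule satisfying Assumption 1. Then for every interval bankruptcy situation (E,[d]) with exact estate, every i ∈ N, and every selection d* ∈ [d], one has f_i(E, d̲_i, d̄_{−i}) ≤ f_i(E, d*) ≤ f_i(E, d̄_i, d̲_{−i}); moreover both bounds are attained by selections of [d], so the interval F_i(f;E,[d]) = [f_i(E, d̲_i, d̄_{−i}), f_i(E, d̄_i, d̲_{−i})] is the smallest closed interval containing all values f_i(E,d*) with d* ∈ [d]. -/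
open Finset

theorem IsBP.mono {n : ℕ} {E : ℝ} {d d' : Fin n → ℝ} (hd : IsBP E d) (hdd' : d ≤ d') :
    IsBP E d' :=
  ⟨hd.1, fun i => (hd.2.1 i).trans (hdd' i),
    hd.2.2.trans (Finset.sum_le_sum fun i _ => hdd' i)⟩

theorem IsIntervalBP.isBP {n : ℕ} {E : ℝ} {dl du : Fin n → ℝ} (h : IsIntervalBP E dl du) :
    IsBP E dl :=
  ⟨h.1, fun i => (h.2.1 i).1, h.2.2⟩

namespace IsSelection

variable {n : ℕ} {dl du d : Fin n → ℝ}

theorem lower (h : dl ≤ du) : IsSelection dl du dl := fun i => ⟨le_rfl, h i⟩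

theorem upper (h : dl ≤ du) : IsSelection dl du du := fun i => ⟨h i, le_rfl⟩

theorem update (hd : IsSelection dl du d) (i : Fin n) {c : ℝ} (hl : dl i ≤ c)
    (hu : c ≤ du i) : IsSelection dl du (Function.update d i c) := by
  intro k
  rcases eq_or_ne k i with rfl | hk
  · simpa using ⟨hl, hu⟩
  · simpa [Function.update_of_ne hk] using hd k

end IsSelection

namespace Assumption1

variable {n : ℕ} {f : ℝ → (Fin n → ℝ) → Fin n → ℝ} {E c : ℝ} {d : Fin n → ℝ}

theorem apply_update_self_le (hA : Assumption1 f) (i : Fin n) (hd : IsBP E d)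
    (hc : IsBP E (Function.update d i c)) (h : c ≤ d i) :
    f E (Function.update d i c) i ≤ f E d i :=
  hA.2.1 E _ _ i hc hd (by simpa using h) fun k hk => Function.update_of_ne hk _ _

theorem apply_update_of_ne_le (hA : Assumption1 f) {i j : Fin n} (hji : j ≠ i)
    (hd : IsBP E d) (hc : IsBP E (Function.update d j c)) (h : d j ≤ c) :
    f E (Function.update d j c) i ≤ f E d i :=
  hA.2.2 E _ _ i j hji hc hd (by simpa using h) fun k hk => Function.update_of_ne hk _ _

/-- Passing from `d` to `d'` one coordinate at a time, every intermediate claims vector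
lies above `d ⊓ d'`, hence is a bankruptcy problem, and every step can only lower `f · i`. -/
theorem apply_le_apply (hA : Assumption1 f) {d' : Fin n → ℝ} (i : Fin n)
    (hBP : IsBP E (d ⊓ d')) (hi : d' i ≤ d i) (hk : ∀ k, k ≠ i → d k ≤ d' k) :
    f E d' i ≤ f E d i := by
  have hmix : ∀ S : Finset (Fin n), IsBP E (S.piecewise d' d) := fun S =>
    hBP.mono (Finset.le_piecewise_of_le_of_le _ inf_le_right inf_le_left)
  suffices ∀ S : Finset (Fin n), f E (S.piecewise d' d) i ≤ f E d i by
    simpa using this Finset.univ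
  intro S
  induction S using Finset.induction_on with
  | empty => simp
  | insert j S hjS ih =>
    have hmix' := hmix (insert j S)
    rw [Finset.piecewise_insert] at hmix' ⊢
    refine le_trans ?_ ih
    rcases eq_or_ne j i with rfl | hji
    · exact hA.apply_update_self_le j (hmix S) hmix'
        (by rwa [Finset.piecewise_eq_of_notMem _ _ _ hjS])
    · exact hA.apply_update_of_ne_le hji (hmix S) hmix'
        (by rw [Finset.piecewise_eq_of_notMem _ _ _ hjS]; exact hk j hji)

end Assumption1

theorem stmt_1_general (n : ℕ)
    (f : ℝ → (Fin n → ℝ) → Fin n → ℝ)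
    (hA : Assumption1 f) :
    ∀ E dl du, IsIntervalBP E dl du → ∀ i : Fin n,
      (∀ d, IsSelection dl du d →
        ruleLow f E dl du i ≤ f E d i ∧ f E d i ≤ ruleHigh f E dl du i) ∧
      (∃ d, IsSelection dl du d ∧ f E d i = ruleLow f E dl du i) ∧
      (∃ d, IsSelection dl du d ∧ f E d i = ruleHigh f E dl du i) := by
  intro E dl du hI i
  have hdl : dl ≤ du := fun k => (hI.2.1 k).2
  have hlow := (IsSelection.upper hdl).update i le_rfl (hdl i)
  have hhigh := (IsSelection.lower hdl).update i (hdl i) le_rfl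
  have hBP {d d'} (hd : IsSelection dl du d) (hd' : IsSelection dl du d') :
      IsBP E (d ⊓ d') :=
    hI.isBP.mono (le_inf (fun k => (hd k).1) fun k => (hd' k).1)
  refine ⟨fun d hd => ⟨?_, ?_⟩, ⟨_, hlow, rfl⟩, ⟨_, hhigh, rfl⟩⟩
  · refine hA.apply_le_apply i (hBP hd hlow) (by simpa using (hd i).1) fun k hk => ?_
    simpa [Function.update_of_ne hk] using (hd k).2
  · refine hA.apply_le_apply i (hBP hhigh hd) (by simpa using (hd i).2) fun k hk => ?_
    simpa [Function.update_of_ne hk] using (hd k).1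

/-- under Assumption 1, for every interval bankruptcy situation with
exact estate, each selection value `f i (E, d*)` lies between the endpoints of the
interval rule, and both endpoints are attained by selections; hence
`F i (f; E, [d])` is the smallest closed interval containing all such values. -/
theorem stmt_1 (n : ℕ) (hn : 1 ≤ n)
    (f : ℝ → (Fin n → ℝ) → Fin n → ℝ) (hf : IsDivisionRule f)
    (hA : Assumption1 f) :
    ∀ E dl du, IsIntervalBP E dl du → ∀ i : Fin n,
      (∀ d, IsSelection dl du d →
        ruleLow f E dl du i ≤ f E d i ∧ f E d i ≤ ruleHigh f E dl du i) ∧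
      (∃ d, IsSelection dl du d ∧ f E d i = ruleLow f E dl du i) ∧
      (∃ d, IsSelection dl du d ∧ f E d i = ruleHigh f E dl du i) :=
  stmt_1_general n f hA
end

section
/- Let f be a division rule satisfying Assumption 1. Then for every interval bankruptcy situation (E,[d]) with exact estate, the interval bankruptcy rule F(f;E,[d]) is weakly efficient, i.e. Σ_{i∈N} f_i(E, d̲_i, d̄_{−i}) ≤ E ≤ Σ_{i∈N} f_i(E, d̄_i, d̲_{−i}), and reasonable, i.e. for every i ∈ N, 0 ≤ f_i(E, d̲_i, d̄_{−i}) ≤ d̲_i and 0 ≤ f_i(E, d̄_i, d̲_{−i}) ≤ d̄_i. -/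
open Finset

lemma mono_aux {n : ℕ} (f : ℝ → (Fin n → ℝ) → Fin n → ℝ)
    (hA : Assumption1 f) (E : ℝ) (d d' : Fin n → ℝ) (i : Fin n)
    (h0 : ∀ j, 0 ≤ d' j) (hE : 0 ≤ E) (hsum : E ≤ ∑ j, d' j)
    (hle : ∀ j, d' j ≤ d j) (hi : d i = d' i) :
    f E d i ≤ f E d' i := by
  have hbp : ∀ s : Finset (Fin n), IsBP E (s.piecewise d' d) := by
    intro s
    refine ⟨hE, fun j => ?_, ?_⟩
    · by_cases h : j ∈ s
      · simpa [Finset.piecewise, h] using h0 j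
      · simpa [Finset.piecewise, h] using le_trans (h0 j) (hle j)
    · calc E ≤ ∑ j, d' j := hsum
        _ ≤ ∑ j, s.piecewise d' d j := by
            refine Finset.sum_le_sum fun j _ => ?_
            by_cases h : j ∈ s <;> simp [Finset.piecewise, h, hle j]
  have key : ∀ s : Finset (Fin n), f E d i ≤ f E (s.piecewise d' d) i := by
    intro s
    induction s using Finset.induction_on with
    | empty => simp
    | @insert j s hj ih =>
      rw [Finset.piecewise_insert]
      by_cases hji : j = i
      · subst hji
        have hgi : (s.piecewise d' d) j = d' j := by
          by_cases h : j ∈ s <;> simp [Finset.piecewise, h, hi]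
        rw [← hgi, Function.update_eq_self]
        exact ih
      · refine le_trans ih (hA.2.2 E (s.piecewise d' d)
          (Function.update (s.piecewise d' d) j (d' j)) i j hji (hbp s) ?_ ?_ ?_)
        · have := hbp (insert j s)
          rwa [Finset.piecewise_insert] at this
        · simp [Finset.piecewise, hj, hle j]
        · intro k hk
          simp [Function.update_of_ne hk]
  have := key Finset.univ
  simpa using this

/-- under Assumption 1, the interval bankruptcy rule with exact estate
is weakly efficient and reasonable. -/
theorem stmt_2 (n : ℕ) (hn : 1 ≤ n)
    (f : ℝ → (Fin n → ℝ) → Fin n → ℝ) (hf : IsDivisionRule f)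
    (hA : Assumption1 f) :
    ∀ E dl du, IsIntervalBP E dl du →
      ((∑ i, ruleLow f E dl du i ≤ E) ∧ (E ≤ ∑ i, ruleHigh f E dl du i)) ∧
      (∀ i : Fin n,
        (0 ≤ ruleLow f E dl du i ∧ ruleLow f E dl du i ≤ dl i) ∧
        (0 ≤ ruleHigh f E dl du i ∧ ruleHigh f E dl du i ≤ du i)) := by

  intro E dl du hIBP
  obtain ⟨hE, hcl, hsum⟩ := hIBP
  have hdlBP : IsBP E dl := ⟨hE, fun i => (hcl i).1, hsum⟩
  have hlowBP : ∀ i, IsBP E (Function.update du i (dl i)) := by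
    intro i
    refine ⟨hE, fun j => ?_, ?_⟩
    · by_cases h : j = i
      · subst h; simp [(hcl j).1]
      · simp [Function.update_of_ne h]; exact le_trans (hcl j).1 (hcl j).2
    · calc E ≤ ∑ j, dl j := hsum
        _ ≤ ∑ j, Function.update du i (dl i) j := by
            refine Finset.sum_le_sum fun j _ => ?_
            by_cases h : j = i
            · subst h; simp
            · simp [Function.update_of_ne h, (hcl j).2]
  have hhighBP : ∀ i, IsBP E (Function.update dl i (du i)) := by
    intro i
    refine ⟨hE, fun j => ?_, ?_⟩
    · by_cases h : j = i
      · subst h; simp [le_trans (hcl j).1 (hcl j).2]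
      · simp [Function.update_of_ne h, (hcl j).1]
    · calc E ≤ ∑ j, dl j := hsum
        _ ≤ ∑ j, Function.update dl i (du i) j := by
            refine Finset.sum_le_sum fun j _ => ?_
            by_cases h : j = i
            · subst h; simp [(hcl j).2]
            · simp [Function.update_of_ne h]
  have hlow_le : ∀ i, ruleLow f E dl du i ≤ f E dl i := by
    intro i
    refine mono_aux f hA E (Function.update du i (dl i)) dl i
      (fun j => (hcl j).1) hE hsum ?_ ?_
    · intro j
      by_cases h : j = i
      · subst h; simp
      · simp [Function.update_of_ne h, (hcl j).2]
    · simp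
  have hhigh_ge : ∀ i, f E dl i ≤ ruleHigh f E dl du i := by
    intro i
    refine hA.2.1 E dl (Function.update dl i (du i)) i hdlBP (hhighBP i) ?_ ?_
    · simp [(hcl i).2]
    · intro j hj; simp [Function.update_of_ne hj]
  have heff := (hf E dl hdlBP).2
  refine ⟨⟨?_, ?_⟩, ?_⟩
  · calc ∑ i, ruleLow f E dl du i ≤ ∑ i, f E dl i :=
        Finset.sum_le_sum fun i _ => hlow_le i
      _ = E := heff
  · calc E = ∑ i, f E dl i := heff.symm
      _ ≤ ∑ i, ruleHigh f E dl du i := Finset.sum_le_sum fun i _ => hhigh_ge i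
  · intro i
    have h1 := (hf E _ (hlowBP i)).1 i
    have h2 := (hf E _ (hhighBP i)).1 i
    constructor
    · refine ⟨h1.1, ?_⟩
      have := h1.2
      simpa [ruleLow] using this
    · refine ⟨h2.1, ?_⟩
      have := h2.2
      simpa [ruleHigh] using this
end

section
/- Let f be a division rule satisfying Assumption 1 and the truncation property f(E,d) = f(E, d ∧ E) for every bankruptcy problem (E,d). Then for every interval bankruptcy situation (E,[d]) with exact estate, the interval bankruptcy rule based on f coincides with its truncated form: for every i ∈ N, f_i(E, d̲_i ∧ E, (d̄ ∧ E)_{−i}) = f_i(E, d̲_i, d̄_{−i}) and f_i(E, d̄_i ∧ E, (d̲ ∧ E)_{−i}) = f_i(E, d̄_i, d̲_{−i}); that is, F(f;E,[d] ∧ E) = F(f;E,[d]). -/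
open Finset

/-- if `f` satisfies Assumption 1 and the truncation property, then the
interval bankruptcy rule with exact estate coincides with its truncated form. -/
theorem stmt_3 (n : ℕ) (hn : 1 ≤ n)
    (f : ℝ → (Fin n → ℝ) → Fin n → ℝ) (hf : IsDivisionRule f)
    (hA : Assumption1 f)
    (htr : ∀ E d, IsBP E d → f E d = f E (truncate E d)) :
    ∀ E dl du, IsIntervalBP E dl du → ∀ i : Fin n,
      ruleLow f E (truncate E dl) (truncate E du) i = ruleLow f E dl du i ∧
      ruleHigh f E (truncate E dl) (truncate E du) i = ruleHigh f E dl du i := by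
  intro E dl du hBP i
  obtain ⟨hE, hdl, hsum⟩ := hBP
  have key : ∀ (c : ℝ) (d : Fin n → ℝ),
      truncate E (Function.update d i c) = Function.update (truncate E d) i (min c E) := by
    intro c d
    funext j
    by_cases h : j = i
    · subst h; simp [truncate]
    · simp [truncate, Function.update, h]
  -- ruleLow
  have hBPlow : IsBP E (Function.update du i (dl i)) := by
    refine ⟨hE, ?_, ?_⟩
    · intro j
      by_cases h : j = i
      · subst h; simp [(hdl j).1]
      · simp [Function.update, h]; exact le_trans (hdl j).1 (hdl j).2
    · calc E ≤ ∑ j, dl j := hsum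
        _ ≤ ∑ j, Function.update du i (dl i) j := by
          apply Finset.sum_le_sum
          intro j _
          by_cases h : j = i
          · subst h; simp
          · simp [Function.update, h]; exact (hdl j).2
  have hBPhigh : IsBP E (Function.update dl i (du i)) := by
    refine ⟨hE, ?_, ?_⟩
    · intro j
      by_cases h : j = i
      · subst h; simp; exact le_trans (hdl j).1 (hdl j).2
      · simp [Function.update, h]; exact (hdl j).1
    · calc E ≤ ∑ j, dl j := hsum
        _ ≤ ∑ j, Function.update dl i (du i) j := by
          apply Finset.sum_le_sum
          intro j _
          by_cases h : j = i
          · subst h; simpa using (hdl j).2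
          · simp [Function.update, h]
  constructor
  · have := htr E (Function.update du i (dl i)) hBPlow
    unfold ruleLow
    rw [show Function.update (truncate E du) i (truncate E dl i)
        = truncate E (Function.update du i (dl i)) by rw [key]; rfl]
    rw [← this]
  · have := htr E (Function.update dl i (du i)) hBPhigh
    unfold ruleHigh
    rw [show Function.update (truncate E dl) i (truncate E du i)
        = truncate E (Function.update dl i (du i)) by rw [key]; rfl]
    rw [← this]
end

section
/- Let f be a division rule satisfying Assumption 1 and the truncation property f(E,d) = f(E, d ∧ E) for every bankruptcy problem (E,d). Then for every interval bankruptcy situation (E,[d]) with exact estate, every i ∈ N and every selection d* ∈ [d], one has f_i(E, d̲_i ∧ E, (d̄ ∧ E)_{−i}) ≤ f_i(E, d*) ≤ f_i(E, d̄_i ∧ E, (d̲ ∧ E)_{−i}), and both bounds are attained by selections of [d]; hence the truncated interval F_i(f;E,[d] ∧ E) is the smallest closed interval containing all values f_i(E,d*) with d* ∈ [d]. -/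
open Finset

lemma truncate_update {n : ℕ} (E : ℝ) (d : Fin n → ℝ) (i : Fin n) (c : ℝ) :
    truncate E (Function.update d i c) = Function.update (truncate E d) i (min c E) := by
  funext j
  by_cases h : j = i
  · subst h; simp [truncate]
  · simp [truncate, Function.update, h]

lemma mono_aux_s4 {n : ℕ} (f : ℝ → (Fin n → ℝ) → Fin n → ℝ) (hA : Assumption1 f)
    (E : ℝ) (hE : 0 ≤ E) (b : Fin n → ℝ)
    (hb0 : ∀ j, 0 ≤ b j) (hbE : ∀ e : Fin n → ℝ, (∀ j, b j ≤ e j) → E ≤ ∑ j, e j)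
    (i : Fin n) (e e' : Fin n → ℝ) (he : ∀ j, b j ≤ e j) (he' : ∀ j, b j ≤ e' j)
    (hi : e i ≤ e' i) (hj : ∀ j, j ≠ i → e' j ≤ e j) :
    f E e i ≤ f E e' i := by
  set g : Finset (Fin n) → Fin n → ℝ := fun S j => if j ∈ S then e' j else e j with hg
  have hBP : ∀ S, IsBP E (g S) := by
    intro S
    have hge : ∀ j, b j ≤ g S j := by
      intro j; by_cases h : j ∈ S <;> simp [hg, h, he j, he' j]
    exact ⟨hE, fun j => (hb0 j).trans (hge j), hbE _ hge⟩
  have key : ∀ S : Finset (Fin n), f E e i ≤ f E (g S) i := by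
    intro S
    induction S using Finset.induction with
    | empty => simp [hg]
    | @insert a S haS ih =>
      refine ih.trans ?_
      by_cases hai : a = i
      · subst hai
        refine hA.2.1 E (g S) (g (insert a S)) a (hBP S) (hBP _) ?_ ?_
        · simp [hg, haS, hi]
        · intro j hja; simp [hg, Finset.mem_insert, hja]
      · refine hA.2.2 E (g S) (g (insert a S)) i a hai (hBP S) (hBP _) ?_ ?_
        · simp [hg, haS, hj a hai]
        · intro k hka; simp [hg, Finset.mem_insert, hka]
  have := key Finset.univ
  simpa [hg] using this

/-- if `f` satisfies Assumption 1 and the truncation property, then for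
every interval bankruptcy situation with exact estate, each selection value is
bounded by the endpoints of the truncated interval rule, and both endpoints are
attained by selections of `[d]`; hence the truncated interval is the smallest
closed interval containing all values `f i (E, d*)`, `d* ∈ [d]`. -/
theorem stmt_4 (n : ℕ) (hn : 1 ≤ n)
    (f : ℝ → (Fin n → ℝ) → Fin n → ℝ) (hf : IsDivisionRule f)
    (hA : Assumption1 f)
    (htr : ∀ E d, IsBP E d → f E d = f E (truncate E d)) :
    ∀ E dl du, IsIntervalBP E dl du → ∀ i : Fin n,
      (∀ d, IsSelection dl du d →
        ruleLow f E (truncate E dl) (truncate E du) i ≤ f E d i ∧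
        f E d i ≤ ruleHigh f E (truncate E dl) (truncate E du) i) ∧
      (∃ d, IsSelection dl du d ∧ f E d i = ruleLow f E (truncate E dl) (truncate E du) i) ∧
      (∃ d, IsSelection dl du d ∧ f E d i = ruleHigh f E (truncate E dl) (truncate E du) i) := by
  intro E dl du hIBP i
  obtain ⟨hE, hld, hEsum⟩ := hIBP
  set b : Fin n → ℝ := fun j => min (dl j) E with hb
  have hb0 : ∀ j, 0 ≤ b j := fun j => le_min (hld j).1 hE
  have hbE : ∀ e : Fin n → ℝ, (∀ j, b j ≤ e j) → E ≤ ∑ j, e j := by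
    intro e hbe
    by_cases hc : ∃ j, E ≤ dl j
    · obtain ⟨j, hj⟩ := hc
      have h1 : E ≤ e j := le_trans (by simp [hb, hj]) (hbe j)
      calc E ≤ e j := h1
        _ ≤ ∑ k, e k := Finset.single_le_sum
            (fun k _ => le_trans (hb0 k) (hbe k)) (Finset.mem_univ j)
    · push_neg at hc
      have : ∀ j, b j = dl j := fun j => min_eq_left (le_of_lt (hc j))
      calc E ≤ ∑ j, dl j := hEsum
        _ = ∑ j, b j := by simp [this]
        _ ≤ ∑ j, e j := Finset.sum_le_sum (fun j _ => hbe j)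
  -- basic BP facts for selections
  have hBPsel : ∀ d, IsSelection dl du d → IsBP E d := by
    intro d hd
    refine ⟨hE, fun j => le_trans (hld j).1 (hd j).1, le_trans hEsum ?_⟩
    exact Finset.sum_le_sum (fun j _ => (hd j).1)
  -- the two endpoint vectors (truncated)
  set L : Fin n → ℝ := Function.update (truncate E du) i (truncate E dl i) with hL
  set H : Fin n → ℝ := Function.update (truncate E dl) i (truncate E du i) with hH
  have hbL : ∀ j, b j ≤ L j := by
    intro j
    by_cases h : j = i
    · subst h; rw [hL, Function.update_self]; exact le_rfl
    · rw [hL, Function.update_of_ne h]; exact min_le_min (hld j).2 le_rfl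
  have hbH : ∀ j, b j ≤ H j := by
    intro j
    by_cases h : j = i
    · subst h; rw [hH, Function.update_self]; exact min_le_min (hld j).2 le_rfl
    · rw [hH, Function.update_of_ne h]; exact le_rfl
  have hbt : ∀ d, IsSelection dl du d → ∀ j, b j ≤ truncate E d j := by
    intro d hd j
    exact min_le_min (hd j).1 le_rfl
  have hruleLow : ruleLow f E (truncate E dl) (truncate E du) i = f E L i := rfl
  have hruleHigh : ruleHigh f E (truncate E dl) (truncate E du) i = f E H i := rfl
  refine ⟨?_, ?_, ?_⟩
  · intro d hd
    have hdBP := hBPsel d hd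
    have htrd : f E d i = f E (truncate E d) i := by rw [htr E d hdBP]
    constructor
    · rw [hruleLow, htrd]
      refine mono_aux_s4 f hA E hE b hb0 hbE i L (truncate E d) hbL (hbt d hd) ?_ ?_
      · rw [hL, Function.update_self]
        exact min_le_min (hd i).1 le_rfl
      · intro j hji
        rw [hL, Function.update_of_ne hji]
        exact min_le_min (hd j).2 le_rfl
    · rw [hruleHigh, htrd]
      refine mono_aux_s4 f hA E hE b hb0 hbE i (truncate E d) H (hbt d hd) hbH ?_ ?_
      · rw [hH, Function.update_self]
        exact min_le_min (hd i).2 le_rfl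
      · intro j hji
        rw [hH, Function.update_of_ne hji]
        exact min_le_min (hd j).1 le_rfl
  · have hsel : IsSelection dl du (Function.update du i (dl i)) := by
      intro j
      by_cases h : j = i
      · subst h; rw [Function.update_self]; exact ⟨le_rfl, (hld j).2⟩
      · rw [Function.update_of_ne h]; exact ⟨(hld j).2, le_rfl⟩
    refine ⟨Function.update du i (dl i), hsel, ?_⟩
    rw [htr E _ (hBPsel _ hsel), hruleLow, truncate_update]
    rfl
  · have hsel : IsSelection dl du (Function.update dl i (du i)) := by
      intro j
      by_cases h : j = i
      · subst h; rw [Function.update_self]; exact ⟨(hld j).2, le_rfl⟩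
      · rw [Function.update_of_ne h]; exact ⟨le_rfl, (hld j).2⟩
    refine ⟨Function.update dl i (du i), hsel, ?_⟩
    rw [htr E _ (hBPsel _ hsel), hruleHigh, truncate_update]
    rfl
end

section
/- Let f be a division rule satisfying Assumption 1 and the truncation property f(E,d) = f(E, d ∧ E) for every bankruptcy problem (E,d). Then for every interval bankruptcy situation (E,[d]) with exact estate, the truncated interval bankruptcy rule F(f;E,[d] ∧ E) is weakly efficient, i.e. Σ_{i∈N} f_i(E, d̲_i ∧ E, (d̄ ∧ E)_{−i}) ≤ E ≤ Σ_{i∈N} f_i(E, d̄_i ∧ E, (d̲ ∧ E)_{−i}), and reasonable, i.e. for every i ∈ N, 0 ≤ f_i(E, d̲_i ∧ E, (d̄ ∧ E)_{−i}) ≤ d̲_i and 0 ≤ f_i(E, d̄_i ∧ E, (d̲ ∧ E)_{−i}) ≤ d̄_i. -/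
open Finset

/-- if `f` satisfies Assumption 1 and the truncation property, then the
truncated interval bankruptcy rule with exact estate is weakly efficient and
reasonable. -/
theorem stmt_5 (n : ℕ) (hn : 1 ≤ n)
    (f : ℝ → (Fin n → ℝ) → Fin n → ℝ) (hf : IsDivisionRule f)
    (hA : Assumption1 f)
    (htr : ∀ E d, IsBP E d → f E d = f E (truncate E d)) :
    ∀ E dl du, IsIntervalBP E dl du →
      ((∑ i, ruleLow f E (truncate E dl) (truncate E du) i ≤ E) ∧
        (E ≤ ∑ i, ruleHigh f E (truncate E dl) (truncate E du) i)) ∧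
      (∀ i : Fin n,
        (0 ≤ ruleLow f E (truncate E dl) (truncate E du) i ∧
          ruleLow f E (truncate E dl) (truncate E du) i ≤ dl i) ∧
        (0 ≤ ruleHigh f E (truncate E dl) (truncate E du) i ∧
          ruleHigh f E (truncate E dl) (truncate E du) i ≤ du i)) := by
  rintro E dl du ⟨hE, hdi, hEd⟩
  set dl' := truncate E dl with hdl'
  set du' := truncate E du with hdu'
  have hdl'nn : ∀ i, 0 ≤ dl' i := fun i => le_min (hdi i).1 hE
  have hle : ∀ i, dl' i ≤ du' i := fun i => min_le_min (hdi i).2 le_rfl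
  have hdu'nn : ∀ i, 0 ≤ du' i := fun i => le_trans (hdl'nn i) (hle i)
  have hsum : E ≤ ∑ i, dl' i := by
    by_cases h : ∃ i, E ≤ dl i
    · obtain ⟨i, hi⟩ := h
      calc E = dl' i := (min_eq_right hi).symm
        _ ≤ ∑ j, dl' j := Finset.single_le_sum (fun j _ => hdl'nn j) (mem_univ i)
    · push_neg at h
      have heq : (∑ i, dl' i) = ∑ i, dl i :=
        Finset.sum_congr rfl fun i _ => min_eq_left (le_of_lt (h i))
      rw [heq]; exact hEd
  have hBPdl : IsBP E dl' := ⟨hE, hdl'nn, hsum⟩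
  have hBPdu : IsBP E du' :=
    ⟨hE, hdu'nn, le_trans hsum (Finset.sum_le_sum fun i _ => hle i)⟩
  have hgen : ∀ (i : Fin n) (c : ℝ), dl' i ≤ c →
      IsBP E (Function.update du' i c) := by
    intro i c hc
    have hge : ∀ j, dl' j ≤ Function.update du' i c j := by
      intro j
      rcases eq_or_ne j i with rfl | hj
      · simpa using hc
      · rw [Function.update_of_ne hj]; exact hle j
    exact ⟨hE, fun j => le_trans (hdl'nn j) (hge j),
      le_trans hsum (Finset.sum_le_sum fun j _ => hge j)⟩
  have hBPlow : ∀ i, IsBP E (Function.update du' i (dl' i)) :=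
    fun i => hgen i _ le_rfl
  have hBPhigh : ∀ i, IsBP E (Function.update dl' i (du' i)) := by
    intro i
    have hge : ∀ j, dl' j ≤ Function.update dl' i (du' i) j := by
      intro j
      rcases eq_or_ne j i with rfl | hj
      · simpa using hle j
      · rw [Function.update_of_ne hj]
    exact ⟨hE, fun j => le_trans (hdl'nn j) (hge j),
      le_trans hsum (Finset.sum_le_sum fun j _ => hge j)⟩
  have hlow_le : ∀ i, ruleLow f E dl' du' i ≤ f E du' i := by
    intro i
    apply hA.2.1 E _ du' i (hBPlow i) hBPdu
    · simpa using hle i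
    · intro j hj; rw [Function.update_of_ne hj]
  have hhigh_ge : ∀ i, f E dl' i ≤ ruleHigh f E dl' du' i := by
    intro i
    apply hA.2.1 E dl' _ i hBPdl (hBPhigh i)
    · simpa using hle i
    · intro j hj; rw [Function.update_of_ne hj]
  refine ⟨⟨?_, ?_⟩, ?_⟩
  · calc (∑ i, ruleLow f E dl' du' i) ≤ ∑ i, f E du' i :=
        Finset.sum_le_sum fun i _ => hlow_le i
      _ = E := (hf E du' hBPdu).2
  · calc E = ∑ i, f E dl' i := ((hf E dl' hBPdl).2).symm
      _ ≤ ∑ i, ruleHigh f E dl' du' i :=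
        Finset.sum_le_sum fun i _ => hhigh_ge i
  · intro i
    have h1 := (hf E _ (hBPlow i)).1 i
    have h2 := (hf E _ (hBPhigh i)).1 i
    refine ⟨⟨h1.1, ?_⟩, ⟨h2.1, ?_⟩⟩
    · exact le_trans h1.2 (by rw [Function.update_self]; exact min_le_left _ _)
    · exact le_trans h2.2 (by rw [Function.update_self]; exact min_le_left _ _)
end

section
/- Let E ≥ 0 and let d ∈ ℝ^n be a claims vector with d_i ≥ 0 for all i. Then for every coalition S ⊆ N, max(0, E − Σ_{i∈N∖S} min(d_i, E)) = max(0, E − Σ_{i∈N∖S} d_i); that is, the bankruptcy game for the truncated claims coincides with the bankruptcy game for the original claims: v_{E, d∧E} = v_{E,d}. -/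
open Finset

/-- the bankruptcy game for the truncated claims coincides with the
bankruptcy game for the original claims: `v_{E, d ∧ E} = v_{E, d}`. -/
theorem stmt_7 (n : ℕ) (hn : 1 ≤ n) (E : ℝ) (hE : 0 ≤ E)
    (d : Fin n → ℝ) (hd : ∀ i, 0 ≤ d i) :
    ∀ S : Finset (Fin n),
      bankruptcyGame E (truncate E d) S = bankruptcyGame E d S := by
  intro S
  unfold bankruptcyGame truncate
  by_cases h : ∀ i ∈ Sᶜ, d i ≤ E
  · congr 1
    congr 1
    exact Finset.sum_congr rfl fun i hi => min_eq_left (h i hi)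
  · push_neg at h
    obtain ⟨i, hi, hiE⟩ := h
    have h1 : E ≤ ∑ j ∈ Sᶜ, min (d j) E := by
      calc E = min (d i) E := (min_eq_right hiE.le).symm
        _ ≤ _ := Finset.single_le_sum (fun j _ => le_min (hd j) hE) hi
    have h2 : E ≤ ∑ j ∈ Sᶜ, d j := by
      calc E ≤ d i := hiE.le
        _ ≤ _ := Finset.single_le_sum (fun j _ => hd j) hi
    rw [max_eq_left (by linarith), max_eq_left (by linarith)]
end

section
/- Every interval bankruptcy game with exact estate coincides with its truncated form: for every interval bankruptcy situation (E,[d]) with exact estate and every coalition S ⊆ N, w_{E,[d] ∧ E}(S) = w_{E,[d]}(S), i.e. max(0, E − Σ_{i∈N∖S} min(d̄_i, E)) = max(0, E − Σ_{i∈N∖S} d̄_i) and max(0, E − Σ_{i∈N∖S} min(d̲_i, E)) = max(0, E − Σ_{i∈N∖S} d̲_i). -/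
open Finset

lemma trunc_eq {n : ℕ} (E : ℝ) (d : Fin n → ℝ) (hE : 0 ≤ E) (hd : ∀ i, 0 ≤ d i)
    (S : Finset (Fin n)) :
    bankruptcyGame E (truncate E d) S = bankruptcyGame E d S := by
  unfold bankruptcyGame truncate
  by_cases h : ∃ i ∈ Sᶜ, E ≤ d i
  · obtain ⟨i, hi, hEi⟩ := h
    have h1 : E ≤ ∑ j ∈ Sᶜ, min (d j) E := by
      calc E = min (d i) E := (min_eq_right hEi).symm
        _ ≤ _ := Finset.single_le_sum (fun j _ => le_min (hd j) hE) hi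
    have h2 : E ≤ ∑ j ∈ Sᶜ, d j :=
      h1.trans (Finset.sum_le_sum fun j _ => min_le_left _ _)
    rw [max_eq_left (by linarith), max_eq_left (by linarith)]
  · push_neg at h
    congr 1
    refine congrArg _ (Finset.sum_congr rfl fun j hj => ?_)
    exact min_eq_left (le_of_lt (h j hj))

/-- every interval bankruptcy game with exact estate coincides with
its truncated form: `w_{E, [d] ∧ E}(S) = w_{E, [d]}(S)` for every coalition. -/
theorem stmt_8 (n : ℕ) (hn : 1 ≤ n) :
    ∀ (E : ℝ) (dl du : Fin n → ℝ), IsIntervalBP E dl du → ∀ S : Finset (Fin n),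
      bankruptcyGame E (truncate E du) S = bankruptcyGame E du S ∧
      bankruptcyGame E (truncate E dl) S = bankruptcyGame E dl S := by
  rintro E dl du ⟨hE, hd, _⟩ S
  refine ⟨trunc_eq E du hE (fun i => (hd i).1.trans (hd i).2) S,
    trunc_eq E dl hE (fun i => (hd i).1) S⟩
end

section
/- Let f be a division rule satisfying Assumption 1 such that the interval bankruptcy rule based on f coincides with its truncated form, i.e. F(f;E,[d] ∧ E) = F(f;E,[d]) for every interval bankruptcy situation (E,[d]) with exact estate. Then F(f;·,·) is interval game theoretic: there exists a map G from interval cooperative games on N to n-tuples of closed intervals such that F(f;E,[d]) = G(w_{E,[d]}) for every interval bankruptcy situation (E,[d]) with exact estate. -/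
open Finset

/-- if the interval bankruptcy rule based on `f` (with exact estate)
coincides with its truncated form, then it is interval game theoretic. -/
theorem stmt_11 (n : ℕ) (hn : 1 ≤ n)
    (f : ℝ → (Fin n → ℝ) → Fin n → ℝ) (hf : IsDivisionRule f)
    (hA : Assumption1 f)
    (htr : ∀ E dl du, IsIntervalBP E dl du →
      intervalRule f E (truncate E dl) (truncate E du) = intervalRule f E dl du) :
    ∃ G : (Finset (Fin n) → ℝ × ℝ) → Fin n → ℝ × ℝ,
      ∀ E dl du, IsIntervalBP E dl du →
        intervalRule f E dl du = G (intervalGame E dl du) := by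
  refine ⟨fun w => intervalRule f ((w Finset.univ).1)
      (fun j => (w Finset.univ).1 - (w (Finset.univ \ {j})).2)
      (fun j => (w Finset.univ).1 - (w (Finset.univ \ {j})).1), ?_⟩
  intro E dl du h
  obtain ⟨hE, hd, hsum⟩ := h
  rw [← htr E dl du ⟨hE, hd, hsum⟩]
  have hEg : (intervalGame E dl du Finset.univ).1 = E := by
    simp [intervalGame, bankruptcyGame, hE]
  have hcompl : ∀ j : Fin n, (Finset.univ \ {j})ᶜ = ({j} : Finset (Fin n)) := by
    intro j
    ext k
    simp [eq_comm]
  have hl : ∀ j, (intervalGame E dl du Finset.univ).1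
      - (intervalGame E dl du (Finset.univ \ {j})).2 = truncate E dl j := by
    intro j
    simp only [intervalGame, bankruptcyGame, hcompl, Finset.sum_singleton, truncate,
      Finset.compl_univ, Finset.sum_empty, sub_zero, max_eq_right hE]
    rcases le_total (dl j) E with h1 | h1
    · rw [max_eq_right (by linarith), min_eq_left h1]; ring
    · rw [max_eq_left (by linarith), min_eq_right h1]; ring
  have hu : ∀ j, (intervalGame E dl du Finset.univ).1
      - (intervalGame E dl du (Finset.univ \ {j})).1 = truncate E du j := by
    intro j
    simp only [intervalGame, bankruptcyGame, hcompl, Finset.sum_singleton, truncate,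
      Finset.compl_univ, Finset.sum_empty, sub_zero, max_eq_right hE]
    rcases le_total (du j) E with h1 | h1
    · rw [max_eq_right (by linarith), min_eq_left h1]; ring
    · rw [max_eq_left (by linarith), min_eq_right h1]; ring
  simp only [hl, hu]
  simp only [hEg]
end

section
/- Let f be a division rule satisfying Assumption 1 that is game theoretic, i.e. f(E,d) = f(E, d ∧ E) for every bankruptcy problem (E,d). Then the interval bankruptcy rule F(f;·,·) based on f is interval game theoretic: there exists a map G from interval cooperative games on N to n-tuples of closed intervals such that F(f;E,[d]) = G(w_{E,[d]}) for every interval bankruptcy situation (E,[d]) with exact estate. -/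
open Finset

lemma sub_max_sub (x E : ℝ) : E - max 0 (E - x) = min x E := by
  rcases le_total x E with h | h
  · rw [min_eq_left h, max_eq_right (by linarith)]; ring
  · rw [min_eq_right h, max_eq_left (by linarith)]; ring

/-- if the classical rule `f` is game theoretic (equivalently, by
Theorem 5 of Curiel–Maschler–Tijs, `f (E, d) = f (E, d ∧ E)` for every bankruptcy
problem), then the interval bankruptcy rule based on `f` (with exact estate) is
interval game theoretic. -/
theorem stmt_12 (n : ℕ) (hn : 1 ≤ n)
    (f : ℝ → (Fin n → ℝ) → Fin n → ℝ) (hf : IsDivisionRule f)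
    (hA : Assumption1 f)
    (htr : ∀ E d, IsBP E d → f E d = f E (truncate E d)) :
    ∃ G : (Finset (Fin n) → ℝ × ℝ) → Fin n → ℝ × ℝ,
      ∀ E dl du, IsIntervalBP E dl du →
        intervalRule f E dl du = G (intervalGame E dl du) := by
  classical
  refine ⟨fun w i =>
    (f ((w Finset.univ).1)
        (Function.update (fun j => (w Finset.univ).1 - (w ({j}ᶜ : Finset (Fin n))).1) i
          ((w Finset.univ).1 - (w ({i}ᶜ : Finset (Fin n))).2)) i,
     f ((w Finset.univ).1)
        (Function.update (fun j => (w Finset.univ).1 - (w ({j}ᶜ : Finset (Fin n))).2) i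
          ((w Finset.univ).1 - (w ({i}ᶜ : Finset (Fin n))).1)) i), ?_⟩
  intro E dl du h
  obtain ⟨hE, hdi, hsum⟩ := h
  have hsumdu : E ≤ ∑ j, du j :=
    hsum.trans (Finset.sum_le_sum fun j _ => (hdi j).2)
  have hEuniv : (intervalGame E dl du Finset.univ).1 = E := by
    simp [intervalGame, bankruptcyGame, hE]
  have hdu : ∀ j, E - (intervalGame E dl du ({j}ᶜ : Finset (Fin n))).1 = truncate E du j := by
    intro j
    simp only [intervalGame, bankruptcyGame, compl_compl, Finset.sum_singleton, truncate]
    exact sub_max_sub _ _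
  have hdl : ∀ j, E - (intervalGame E dl du ({j}ᶜ : Finset (Fin n))).2 = truncate E dl j := by
    intro j
    simp only [intervalGame, bankruptcyGame, compl_compl, Finset.sum_singleton, truncate]
    exact sub_max_sub _ _
  funext i
  have hbp1 : IsBP E (Function.update du i (dl i)) := by
    refine ⟨hE, fun j => ?_, ?_⟩
    · rcases eq_or_ne j i with rfl | hj
      · simp [(hdi j).1]
      · simp [Function.update_of_ne hj, le_trans (hdi j).1 (hdi j).2]
    · refine hsum.trans (Finset.sum_le_sum fun j _ => ?_)
      rcases eq_or_ne j i with rfl | hj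
      · simp
      · simp [Function.update_of_ne hj, (hdi j).2]
  have hbp2 : IsBP E (Function.update dl i (du i)) := by
    refine ⟨hE, fun j => ?_, ?_⟩
    · rcases eq_or_ne j i with rfl | hj
      · simpa using le_trans (hdi _).1 (hdi _).2
      · simp [Function.update_of_ne hj, (hdi j).1]
    · refine hsum.trans (Finset.sum_le_sum fun j _ => ?_)
      rcases eq_or_ne j i with rfl | hj
      · simpa using (hdi _).2
      · simp [Function.update_of_ne hj]
  have e1 : ruleLow f E dl du i =
      f E (Function.update (truncate E du) i (min (dl i) E)) i := by
    rw [ruleLow, htr E _ hbp1, truncate_update]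
  have e2 : ruleHigh f E dl du i =
      f E (Function.update (truncate E dl) i (min (du i) E)) i := by
    rw [ruleHigh, htr E _ hbp2, truncate_update]
  show (ruleLow f E dl du i, ruleHigh f E dl du i) = _
  rw [e1, e2]
  simp only [hEuniv, hdu, hdl]
  rfl
end

section
/- Let f be a division rule satisfying Assumption 1. Then for every interval bankruptcy situation ([E],[d]) with interval estate, every i ∈ N, every E* ∈ [E̲, Ē] and every selection d* ∈ [d], one has f_i(E̲, d̲_i, d̄_{−i}) ≤ f_i(E*, d*) ≤ f_i(Ē, d̄_i, d̲_{−i}); moreover both bounds are attained, so the interval F_i(f;[E],[d]) = [f_i(E̲, d̲_i, d̄_{−i}), f_i(Ē, d̄_i, d̲_{−i})] is the smallest closed interval containing all values f_i(E*, d*) with E* ∈ [E̲, Ē] and d* ∈ [d]. -/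
open Finset

lemma box_isBP {n : ℕ} {E : ℝ} {dl du d : Fin n → ℝ}
    (hE : 0 ≤ E) (hsum : E ≤ ∑ i, dl i)
    (hd : ∀ i, dl i ≤ d i ∧ d i ≤ du i) (hdl : ∀ i, 0 ≤ dl i) : IsBP E d := by
  refine ⟨hE, fun i => le_trans (hdl i) (hd i).1, le_trans hsum ?_⟩
  exact Finset.sum_le_sum fun i _ => (hd i).1

lemma hybrid_mono {n : ℕ} {f : ℝ → (Fin n → ℝ) → Fin n → ℝ}
    (hA : Assumption1 f) {E : ℝ} {dl du a b : Fin n → ℝ}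
    (hE : 0 ≤ E) (hsum : E ≤ ∑ i, dl i) (hdl : ∀ i, 0 ≤ dl i)
    (ha : ∀ j, dl j ≤ a j ∧ a j ≤ du j) (hb : ∀ j, dl j ≤ b j ∧ b j ≤ du j)
    (i : Fin n) (hi : a i ≤ b i) (hothers : ∀ j, j ≠ i → b j ≤ a j) :
    f E a i ≤ f E b i := by
  -- hybrid vector: coordinates in S switched to b
  have key : ∀ S : Finset (Fin n),
      f E a i ≤ f E (fun j => if j ∈ S then b j else a j) i := by
    intro S
    induction S using Finset.induction_on with
    | empty => simp
    | @insert k S hk ih =>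
      set c : Fin n → ℝ := fun j => if j ∈ S then b j else a j with hc
      set c' : Fin n → ℝ := fun j => if j ∈ insert k S then b j else a j with hc'
      have hbox : ∀ (v : Fin n → ℝ), (∀ j, v j = a j ∨ v j = b j) →
          (∀ j, dl j ≤ v j ∧ v j ≤ du j) := by
        intro v hv j
        rcases hv j with h | h <;> rw [h]
        · exact ha j
        · exact hb j
      have hcbox : ∀ j, dl j ≤ c j ∧ c j ≤ du j := by
        apply hbox
        intro j
        by_cases h : j ∈ S
        · right; simp only [hc]; rw [if_pos h]
        · left; simp only [hc]; rw [if_neg h]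
      have hc'box : ∀ j, dl j ≤ c' j ∧ c' j ≤ du j := by
        apply hbox
        intro j
        by_cases h : j ∈ insert k S
        · right; simp only [hc']; rw [if_pos h]
        · left; simp only [hc']; rw [if_neg h]
      have hBPc : IsBP E c := box_isBP hE hsum hcbox hdl
      have hBPc' : IsBP E c' := box_isBP hE hsum hc'box hdl
      have heq : ∀ j, j ≠ k → c j = c' j := by
        intro j hj
        simp only [hc, hc', Finset.mem_insert]
        by_cases h : j ∈ S <;> simp [h, hj]
      have hck : c k = a k := by simp [hc, hk]
      have hc'k : c' k = b k := by simp [hc']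
      refine le_trans ih ?_
      by_cases hki : k = i
      · subst hki
        exact hA.2.1 E c c' k hBPc hBPc' (by rw [hck, hc'k]; exact hi) heq
      · exact hA.2.2 E c c' i k hki hBPc hBPc'
          (by rw [hck, hc'k]; exact hothers k hki) heq
  have := key Finset.univ
  simpa using this

/-- under Assumption 1, for every interval bankruptcy situation with
interval estate, every value `f i (E*, d*)` with `E* ∈ [El, Eu]` and `d* ∈ [d]`
lies between `f i (El, dl i, du₋ᵢ)` and `f i (Eu, du i, dl₋ᵢ)`, and both bounds are
attained; hence the interval rule gives the smallest closed interval containing all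
such values. -/
theorem stmt_14 (n : ℕ) (hn : 1 ≤ n)
    (f : ℝ → (Fin n → ℝ) → Fin n → ℝ) (hf : IsDivisionRule f)
    (hA : Assumption1 f) :
    ∀ El Eu dl du, IsIntervalBPE El Eu dl du → ∀ i : Fin n,
      (∀ E d, El ≤ E → E ≤ Eu → IsSelection dl du d →
        ruleLow f El dl du i ≤ f E d i ∧ f E d i ≤ ruleHigh f Eu dl du i) ∧
      (∃ E d, El ≤ E ∧ E ≤ Eu ∧ IsSelection dl du d ∧ f E d i = ruleLow f El dl du i) ∧
      (∃ E d, El ≤ E ∧ E ≤ Eu ∧ IsSelection dl du d ∧ f E d i = ruleHigh f Eu dl du i) := by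
  intro El Eu dl du hBP i
  obtain ⟨hEl0, hElEu, hbox, hEusum⟩ := hBP
  have hdl : ∀ j, 0 ≤ dl j := fun j => (hbox j).1
  -- low vector and high vector are selections
  have hlowsel : IsSelection dl du (Function.update du i (dl i)) := by
    intro j
    rcases eq_or_ne j i with rfl | hj
    · rw [Function.update_self]; exact ⟨le_refl _, (hbox j).2⟩
    · rw [Function.update_of_ne hj]; exact ⟨(hbox j).2, le_refl _⟩
  have hhighsel : IsSelection dl du (Function.update dl i (du i)) := by
    intro j
    rcases eq_or_ne j i with rfl | hj
    · rw [Function.update_self]; exact ⟨(hbox j).2, le_refl _⟩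
    · rw [Function.update_of_ne hj]; exact ⟨le_refl _, (hbox j).2⟩
  refine ⟨?_, ⟨El, _, le_refl _, hElEu, hlowsel, rfl⟩,
    ⟨Eu, _, hElEu, le_refl _, hhighsel, rfl⟩⟩
  intro E d hElE hEEu hsel
  have hE0 : 0 ≤ E := le_trans hEl0 hElE
  have hEsum : E ≤ ∑ j, dl j := le_trans hEEu hEusum
  have hBPlowEl : IsBP El (Function.update du i (dl i)) :=
    box_isBP hEl0 (le_trans hElEu hEusum) hlowsel hdl
  have hBPlowE : IsBP El (Function.update du i (dl i)) := hBPlowEl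
  have hBPlowE' : IsBP E (Function.update du i (dl i)) :=
    box_isBP hE0 hEsum hlowsel hdl
  have hBPhighE : IsBP E (Function.update dl i (du i)) :=
    box_isBP hE0 hEsum hhighsel hdl
  have hBPhighEu : IsBP Eu (Function.update dl i (du i)) :=
    box_isBP (le_trans hEl0 hElEu) hEusum hhighsel hdl
  constructor
  · -- lower bound
    have h1 : f El (Function.update du i (dl i)) i ≤ f E (Function.update du i (dl i)) i :=
      hA.1 El E _ hBPlowEl hBPlowE' hElE i
    have h2 : f E (Function.update du i (dl i)) i ≤ f E d i := by
      apply hybrid_mono hA hE0 hEsum hdl hlowsel hsel i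
      · rw [Function.update_self]; exact (hsel i).1
      · intro j hj; rw [Function.update_of_ne hj]; exact (hsel j).2
    exact le_trans h1 h2
  · -- upper bound
    have h1 : f E d i ≤ f E (Function.update dl i (du i)) i := by
      apply hybrid_mono hA hE0 hEsum hdl hsel hhighsel i
      · rw [Function.update_self]; exact (hsel i).2
      · intro j hj; rw [Function.update_of_ne hj]; exact (hsel j).1
    have h2 : f E (Function.update dl i (du i)) i ≤ f Eu (Function.update dl i (du i)) i :=
      hA.1 E Eu _ hBPhighE hBPhighEu hEEu i
    exact le_trans h1 h2
end

section
/- Let f be a division rule satisfying Assumption 1. Then for every interval bankruptcy situation ([E],[d]) with interval estate, the interval bankruptcy rule F(f;[E],[d]) is weakly efficient, i.e. Σ_{i∈N} f_i(E̲, d̲_i, d̄_{−i}) ≤ E̲ and Ē ≤ Σ_{i∈N} f_i(Ē, d̄_i, d̲_{−i}) (so the interval [Σ_i lower endpoints, Σ_i upper endpoints] contains [E̲, Ē]), and reasonable, i.e. for every i ∈ N, 0 ≤ f_i(E̲, d̲_i, d̄_{−i}) ≤ d̲_i and 0 ≤ f_i(Ē, d̄_i, d̲_{−i}) ≤ d̄_i.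 -/
open Finset

section Aux

variable {n : ℕ} (f : ℝ → (Fin n → ℝ) → Fin n → ℝ)

/-- Raising others' claims (one finite set at a time) weakly decreases player i's payoff. -/
lemma low_chain (hA : Assumption1 f) (E : ℝ) (dl du : Fin n → ℝ)
    (hd : ∀ i, 0 ≤ dl i ∧ dl i ≤ du i) (hE0 : 0 ≤ E) (hEsum : E ≤ ∑ j, dl j)
    (i : Fin n) (S : Finset (Fin n)) (hiS : i ∉ S) :
    f E (fun j => if j ∈ S then du j else dl j) i ≤ f E dl i := by
  classical
  induction S using Finset.induction_on with
  | empty => simp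
  | @insert a S haS ih =>
    have hai : a ≠ i := fun h => hiS (h ▸ Finset.mem_insert_self a S)
    have hiS' : i ∉ S := fun h => hiS (Finset.mem_insert_of_mem h)
    refine le_trans ?_ (ih hiS')
    set dold : Fin n → ℝ := fun j => if j ∈ S then du j else dl j with hdold
    set dnew : Fin n → ℝ := fun j => if j ∈ insert a S then du j else dl j with hdnew
    have hle : ∀ j, dl j ≤ dold j := by
      intro j; by_cases h : j ∈ S <;> simp [dold, h, (hd j).2]
    have hle' : ∀ j, dl j ≤ dnew j := by
      intro j; simp only [dnew]; split_ifs <;> simp [(hd j).2]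
    have hBPold : IsBP E dold :=
      ⟨hE0, fun j => le_trans (hd j).1 (hle j),
        le_trans hEsum (Finset.sum_le_sum fun j _ => hle j)⟩
    have hBPnew : IsBP E dnew :=
      ⟨hE0, fun j => le_trans (hd j).1 (hle' j),
        le_trans hEsum (Finset.sum_le_sum fun j _ => hle' j)⟩
    refine hA.2.2 E dnew dold i a hai hBPnew hBPold ?_ ?_
    · simp [dold, dnew, haS, (hd a).2]
    · intro k hk
      simp [dold, dnew, Finset.mem_insert, hk]

/-- Lowering others' claims weakly increases player i's payoff. -/
lemma high_chain (hA : Assumption1 f) (E : ℝ) (dl du : Fin n → ℝ)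
    (hd : ∀ i, 0 ≤ dl i ∧ dl i ≤ du i) (hE0 : 0 ≤ E) (hEsum : E ≤ ∑ j, dl j)
    (i : Fin n) (S : Finset (Fin n)) (hiS : i ∉ S) :
    f E du i ≤ f E (fun j => if j ∈ S then dl j else du j) i := by
  classical
  induction S using Finset.induction_on with
  | empty => simp
  | @insert a S haS ih =>
    have hai : a ≠ i := fun h => hiS (h ▸ Finset.mem_insert_self a S)
    have hiS' : i ∉ S := fun h => hiS (Finset.mem_insert_of_mem h)
    refine le_trans (ih hiS') ?_
    set dold : Fin n → ℝ := fun j => if j ∈ S then dl j else du j with hdold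
    set dnew : Fin n → ℝ := fun j => if j ∈ insert a S then dl j else du j with hdnew
    have hle : ∀ j, dl j ≤ dold j := by
      intro j; by_cases h : j ∈ S <;> simp [dold, h, (hd j).2]
    have hle' : ∀ j, dl j ≤ dnew j := by
      intro j; simp only [dnew]; split_ifs <;> simp [(hd j).2]
    have hBPold : IsBP E dold :=
      ⟨hE0, fun j => le_trans (hd j).1 (hle j),
        le_trans hEsum (Finset.sum_le_sum fun j _ => hle j)⟩
    have hBPnew : IsBP E dnew :=
      ⟨hE0, fun j => le_trans (hd j).1 (hle' j),
        le_trans hEsum (Finset.sum_le_sum fun j _ => hle' j)⟩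
    refine hA.2.2 E dold dnew i a hai hBPold hBPnew ?_ ?_
    · simp [dold, dnew, haS, (hd a).2]
    · intro k hk
      simp [dold, dnew, Finset.mem_insert, hk]

end Aux

/-- under Assumption 1, the interval bankruptcy rule with interval
estate is weakly efficient (the interval of total payoffs contains `[El, Eu]`) and
reasonable. -/
theorem stmt_15 (n : ℕ) (hn : 1 ≤ n)
    (f : ℝ → (Fin n → ℝ) → Fin n → ℝ) (hf : IsDivisionRule f)
    (hA : Assumption1 f) :
    ∀ El Eu dl du, IsIntervalBPE El Eu dl du →
      ((∑ i, ruleLow f El dl du i ≤ El) ∧ (Eu ≤ ∑ i, ruleHigh f Eu dl du i)) ∧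
      (∀ i : Fin n,
        (0 ≤ ruleLow f El dl du i ∧ ruleLow f El dl du i ≤ dl i) ∧
        (0 ≤ ruleHigh f Eu dl du i ∧ ruleHigh f Eu dl du i ≤ du i)) := by
  
  classical
  rintro El Eu dl du ⟨hEl0, hElEu, hd, hEu⟩
  have hEu0 : 0 ≤ Eu := le_trans hEl0 hElEu
  have hEl_sum : El ≤ ∑ j, dl j := le_trans hElEu hEu
  have hdu_sum : (∑ j, dl j) ≤ ∑ j, du j := Finset.sum_le_sum fun j _ => (hd j).2
  have hBPl : IsBP El dl := ⟨hEl0, fun j => (hd j).1, hEl_sum⟩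
  have hBPu : IsBP Eu du :=
    ⟨hEu0, fun j => le_trans (hd j).1 (hd j).2, le_trans hEu hdu_sum⟩
  have hupd_lo : ∀ i : Fin n, Function.update du i (dl i) =
      fun j => if j ∈ Finset.univ.erase i then du j else dl j := by
    intro i; funext j
    by_cases h : j = i <;> simp [Function.update, h]
  have hupd_hi : ∀ i : Fin n, Function.update dl i (du i) =
      fun j => if j ∈ Finset.univ.erase i then dl j else du j := by
    intro i; funext j
    by_cases h : j = i <;> simp [Function.update, h]
  have hlow : ∀ i : Fin n, ruleLow f El dl du i ≤ f El dl i := by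
    intro i
    rw [ruleLow, hupd_lo i]
    exact low_chain f hA El dl du hd hEl0 hEl_sum i _ (Finset.notMem_erase i _)
  have hhigh : ∀ i : Fin n, f Eu du i ≤ ruleHigh f Eu dl du i := by
    intro i
    rw [ruleHigh, hupd_hi i]
    exact high_chain f hA Eu dl du hd hEu0 hEu i _ (Finset.notMem_erase i _)
  have hBPlo : ∀ i : Fin n, IsBP El (Function.update du i (dl i)) := by
    intro i
    have hle : ∀ j, dl j ≤ Function.update du i (dl i) j := by
      intro j; by_cases h : j = i <;> simp [Function.update, h, (hd i).2, (hd j).2]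
    exact ⟨hEl0, fun j => le_trans (hd j).1 (hle j),
      le_trans hEl_sum (Finset.sum_le_sum fun j _ => hle j)⟩
  have hBPhi : ∀ i : Fin n, IsBP Eu (Function.update dl i (du i)) := by
    intro i
    have hle : ∀ j, dl j ≤ Function.update dl i (du i) j := by
      intro j; by_cases h : j = i <;> simp [Function.update, h, (hd i).2, (hd j).2]
    exact ⟨hEu0, fun j => le_trans (hd j).1 (hle j),
      le_trans hEu (Finset.sum_le_sum fun j _ => hle j)⟩
  constructor
  · constructor
    · calc ∑ i, ruleLow f El dl du i ≤ ∑ i, f El dl i :=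
            Finset.sum_le_sum fun i _ => hlow i
        _ = El := (hf El dl hBPl).2
    · calc Eu = ∑ i, f Eu du i := ((hf Eu du hBPu).2).symm
        _ ≤ ∑ i, ruleHigh f Eu dl du i := Finset.sum_le_sum fun i _ => hhigh i
  · intro i
    have h1 := ((hf El _ (hBPlo i)).1 i)
    have h2 := ((hf Eu _ (hBPhi i)).1 i)
    refine ⟨⟨h1.1, ?_⟩, ⟨h2.1, ?_⟩⟩
    · have := h1.2; rwa [Function.update_self] at this
    · have := h2.2; rwa [Function.update_self] at this
end

section
/- For every interval bankruptcy situation ([E],[d]) with interval estate, every coalition S ⊆ N, every E* ∈ [E̲, Ē] and every selection d* ∈ [d], one has max(0, E̲ − Σ_{i∈N∖S} d̄_i) ≤ v_{E*,d*}(S) ≤ max(0, Ē − Σ_{i∈N∖S} d̲_i), and both bounds are attained; hence the interval w_{[E],[d]}(S) = [v_{E̲,d̄}(S), v_{Ē,d̲}(S)] is the smallest closed interval containing all values v_{E*,d*}(S) with E* ∈ [E̲, Ē] and d* ∈ [d]. -/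
open Finset

/-- for every interval bankruptcy situation with interval estate and
every coalition `S`, every value `v_{E*,d*}(S)` with `E* ∈ [El, Eu]`, `d* ∈ [d]`
lies between `v_{El,du}(S)` and `v_{Eu,dl}(S)`, and both bounds are attained; hence
`w_{[E],[d]}(S)` is the smallest closed interval containing all such values. -/
theorem stmt_16 (n : ℕ) (hn : 1 ≤ n) :
    ∀ (El Eu : ℝ) (dl du : Fin n → ℝ), IsIntervalBPE El Eu dl du →
      ∀ S : Finset (Fin n),
      (∀ E d, El ≤ E → E ≤ Eu → IsSelection dl du d →
        bankruptcyGame El du S ≤ bankruptcyGame E d S ∧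
        bankruptcyGame E d S ≤ bankruptcyGame Eu dl S) ∧
      (∃ E d, El ≤ E ∧ E ≤ Eu ∧ IsSelection dl du d ∧
        bankruptcyGame E d S = bankruptcyGame El du S) ∧
      (∃ E d, El ≤ E ∧ E ≤ Eu ∧ IsSelection dl du d ∧
        bankruptcyGame E d S = bankruptcyGame Eu dl S) := by
  intro El Eu dl du h S
  obtain ⟨h0, hle, hd, _⟩ := h
  refine ⟨fun E d hE1 hE2 hsel => ?_, ⟨El, du, le_refl _, hle,
      fun i => ⟨(hd i).2, le_refl _⟩, rfl⟩, ⟨Eu, dl, hle, le_refl _,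
      fun i => ⟨le_refl _, (hd i).2⟩, rfl⟩⟩
  constructor
  · apply max_le_max (le_refl 0)
    have : ∑ i ∈ Sᶜ, d i ≤ ∑ i ∈ Sᶜ, du i := Finset.sum_le_sum fun i _ => (hsel i).2
    unfold bankruptcyGame at *
    linarith
  · apply max_le_max (le_refl 0)
    have : ∑ i ∈ Sᶜ, dl i ≤ ∑ i ∈ Sᶜ, d i := Finset.sum_le_sum fun i _ => (hsel i).1
    linarith
end
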